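/- arXiv:2109.06350 — 7 statements merged into one kernel-verified Lean document; each statement's English description precedes it below -/
import Mathlib

section
/- Let T > 0 and a ∈ ℝ, and let p_{T,a}(t) = a − √(a²+1)·tanh((t−T)·√(a²+1) + artanh(a/√(a²+1))). Then ∫_0^T p_{T,a}(t) dt = f_T(a), where f_T(a) = a·T − log(√(a²+1)) + log(cosh(log(√(a²+1)+a) − T·√(a²+1))). -/
noncomputable def artanh (x : ℝ) : ℝ := Real.log ((1 + x) / (1 - x)) / 2

/-- `p T a t = a − √(a²+1)·tanh((t−T)·√(a²+1) + artanh(a/√(a²+1)))`. -/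
noncomputable def riccatiP (T a t : ℝ) : ℝ :=
  a - Real.sqrt (a ^ 2 + 1) *
    Real.tanh ((t - T) * Real.sqrt (a ^ 2 + 1) + artanh (a / Real.sqrt (a ^ 2 + 1)))

/-- `f T a = a·T − log(√(a²+1)) + log(cosh(log(√(a²+1)+a) − T·√(a²+1)))`. -/
noncomputable def optCost (T a : ℝ) : ℝ :=
  a * T - Real.log (Real.sqrt (a ^ 2 + 1)) +
    Real.log (Real.cosh (Real.log (Real.sqrt (a ^ 2 + 1) + a) - T * Real.sqrt (a ^ 2 + 1)))

/-- The integral of `p_{T,a}` over `[0,T]` equals the closed-form optimal cost `f_T(a)`. -/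
theorem integral_riccatiP_eq_optCost (T a : ℝ) (hT : 0 < T) :
    ∫ t in (0:ℝ)..T, riccatiP T a t = optCost T a := by
  set s := Real.sqrt (a ^ 2 + 1) with hs
  have hpos : (0:ℝ) < a ^ 2 + 1 := by positivity
  have hs2 : s ^ 2 = a ^ 2 + 1 := Real.sq_sqrt hpos.le
  have hsp : 0 < s := Real.sqrt_pos.mpr hpos
  have habs : a < s := by
    nlinarith [abs_nonneg a, sq_abs a, neg_abs_le a, le_abs_self a]
  have hsa : 0 < s + a := by nlinarith [le_abs_self a, neg_abs_le a, sq_abs a]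
  have hmul : (s + a) * (s - a) = 1 := by nlinarith
  have hsma : s - a = (s + a)⁻¹ := by
    field_simp
    linarith [hmul]
  have hL : artanh (a / s) = Real.log (s + a) := by
    unfold artanh
    have hma : 0 < s - a := by nlinarith
    have h1 : 1 + a / s = (s + a) / s := by field_simp
    have h2 : 1 - a / s = (s - a) / s := by field_simp
    have h3 : (s + a) / s / ((s - a) / s) = (s + a) ^ 2 := by
      field_simp
      nlinarith [hmul]
    rw [h1, h2, h3, Real.log_pow]
    push_cast
    ring
  set L := Real.log (s + a) with hLdef
  have hcoshL : Real.cosh L = s := by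
    rw [Real.cosh_eq, Real.exp_log hsa, Real.exp_neg, Real.exp_log hsa, ← hsma]
    ring
  have key : ∀ t : ℝ, HasDerivAt (fun t => a * t - Real.log (Real.cosh ((t - T) * s + L)))
      (riccatiP T a t) t := by
    intro t
    have h1 : HasDerivAt (fun t : ℝ => (t - T) * s + L) s t := by
      simpa using (((hasDerivAt_id t).sub_const T).mul_const s).add_const L
    have h2 := (Real.hasDerivAt_cosh ((t - T) * s + L)).comp t h1
    have h3 := (Real.hasDerivAt_log (Real.cosh_pos (x := (t - T) * s + L)).ne').comp t h2
    have h4 := ((hasDerivAt_id t).const_mul a).sub h3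
    have heq : riccatiP T a t
        = a - (Real.cosh ((t - T) * s + L))⁻¹ * (Real.sinh ((t - T) * s + L) * s) := by
      rw [riccatiP, Real.tanh_eq_sinh_div_cosh, hL]
      field_simp
      rw [← hs]; ring
    rw [heq]
    exact h4.congr_deriv (by ring)
  have hcont : Continuous (fun t => riccatiP T a t) := by
    unfold riccatiP
    have htanh : Continuous Real.tanh := by
      have he : Real.tanh = fun x => Real.sinh x / Real.cosh x :=
        funext fun x => Real.tanh_eq_sinh_div_cosh x
      rw [he]
      exact Real.continuous_sinh.div Real.continuous_cosh fun x => (Real.cosh_pos x).ne'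
    exact continuous_const.sub (continuous_const.mul (htanh.comp
      (((continuous_id.sub continuous_const).mul continuous_const).add continuous_const)))
  rw [intervalIntegral.integral_eq_sub_of_hasDerivAt (fun t _ => key t)
    (hcont.intervalIntegrable 0 T)]
  simp only [optCost, ← hs, ← hLdef]
  have h0 : (0 - T) * s + L = L - T * s := by ring
  have h1 : (T - T) * s + L = L := by ring
  rw [h0, h1, hcoshL]
  ring
end

section
/- For every fixed T > 0, the function f_T(a) = a·T − log(√(a²+1)) + log(cosh(log(√(a²+1)+a) − T·√(a²+1))) is strictly increasing on ℝ (equivalently, its derivative with respect to a is strictly positive at every a ∈ ℝ). -/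
lemma sinh_lt_mul_cosh {x : ℝ} (hx : 0 < x) : Real.sinh x < x * Real.cosh x := by
  have hder : ∀ y : ℝ, HasDerivAt (fun y => y * Real.cosh y - Real.sinh y) (y * Real.sinh y) y := by
    intro y
    have h1 : HasDerivAt (fun y : ℝ => y * Real.cosh y)
        (1 * Real.cosh y + y * Real.sinh y) y :=
      (hasDerivAt_id y).mul (Real.hasDerivAt_cosh y)
    have h2 := h1.sub (Real.hasDerivAt_sinh y)
    exact h2.congr_deriv (by ring)
  have hmono : StrictMonoOn (fun y => y * Real.cosh y - Real.sinh y) (Set.Ici (0:ℝ)) := by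
    apply strictMonoOn_of_deriv_pos (convex_Ici 0)
    · exact Continuous.continuousOn (by continuity)
    · intro y hy
      rw [interior_Ici] at hy
      rw [(hder y).deriv]
      exact mul_pos hy (Real.sinh_pos_iff.mpr hy)
  have := hmono Set.self_mem_Ici (Set.mem_Ici.mpr hx.le) hx
  simpa using this

lemma g_pos (T a : ℝ) :
    0 < Real.sqrt (a ^ 2 + 1) * Real.cosh (T * Real.sqrt (a ^ 2 + 1))
        - a * Real.sinh (T * Real.sqrt (a ^ 2 + 1)) := by
  set s := Real.sqrt (a ^ 2 + 1) with hsdef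
  have hs : 0 < s := Real.sqrt_pos.mpr (by positivity)
  have hs2 : s ^ 2 = a ^ 2 + 1 := Real.sq_sqrt (by positivity)
  set c := T * s
  have h1 : 0 < Real.cosh c := Real.cosh_pos c
  have h2 : Real.cosh c ^ 2 = Real.sinh c ^ 2 + 1 := Real.cosh_sq c
  have habs : |Real.sinh c| < Real.cosh c := by
    nlinarith [sq_abs (Real.sinh c), abs_nonneg (Real.sinh c)]
  have haa : |a| < s := by
    nlinarith [sq_abs a, abs_nonneg a]
  nlinarith [le_abs_self (a * Real.sinh c), abs_mul a (Real.sinh c),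
    abs_nonneg a, abs_nonneg (Real.sinh c)]

lemma optCost_eq (T a : ℝ) :
    optCost T a = a * T - Real.log (Real.sqrt (a ^ 2 + 1)) +
      Real.log (Real.sqrt (a ^ 2 + 1) * Real.cosh (T * Real.sqrt (a ^ 2 + 1))
        - a * Real.sinh (T * Real.sqrt (a ^ 2 + 1))) := by
  unfold optCost
  have h1 : Real.sqrt (a ^ 2 + 1) + a = a + Real.sqrt (1 + a ^ 2) := by
    rw [add_comm (a ^ 2) 1, add_comm]
  have h2 : Real.log (a + Real.sqrt (1 + a ^ 2)) = Real.arsinh a := rfl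
  rw [h1, h2, Real.cosh_sub, Real.cosh_arsinh, Real.sinh_arsinh, add_comm (1:ℝ) (a ^ 2)]

/-- For every fixed `T > 0`, the function `a ↦ f_T(a)` is strictly increasing on `ℝ`. -/
theorem optCost_strictMono (T : ℝ) (hT : 0 < T) : StrictMono (optCost T) := by
  have hfun : optCost T = fun a => a * T - Real.log (Real.sqrt (a ^ 2 + 1)) +
      Real.log (Real.sqrt (a ^ 2 + 1) * Real.cosh (T * Real.sqrt (a ^ 2 + 1))
        - a * Real.sinh (T * Real.sqrt (a ^ 2 + 1))) := funext fun a => optCost_eq T a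
  rw [hfun]
  apply strictMono_of_deriv_pos
  intro x
  set s := Real.sqrt (x ^ 2 + 1) with hsdef
  have hs : 0 < s := Real.sqrt_pos.mpr (by positivity)
  have hs2 : s ^ 2 = x ^ 2 + 1 := Real.sq_sqrt (by positivity)
  set C := Real.cosh (T * s) with hC
  set S := Real.sinh (T * s) with hS
  have hg : 0 < s * C - x * S := g_pos T x
  -- derivative of sqrt(a^2+1)
  have h0 : HasDerivAt (fun a : ℝ => a ^ 2 + 1) (2 * x) x := by
    simpa using (hasDerivAt_pow 2 x).add_const 1
  have hds : HasDerivAt (fun a : ℝ => Real.sqrt (a ^ 2 + 1)) (x / s) x := by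
    have := h0.sqrt (by positivity)
    convert this using 1
    rw [← hsdef]; field_simp
  have hdc : HasDerivAt (fun a : ℝ => T * Real.sqrt (a ^ 2 + 1)) (T * (x / s)) x :=
    hds.const_mul T
  have hcosh : HasDerivAt (fun a : ℝ => Real.cosh (T * Real.sqrt (a ^ 2 + 1)))
      (S * (T * (x / s))) x := hdc.cosh
  have hsinh : HasDerivAt (fun a : ℝ => Real.sinh (T * Real.sqrt (a ^ 2 + 1)))
      (C * (T * (x / s))) x := hdc.sinh
  have hgd : HasDerivAt (fun a : ℝ => Real.sqrt (a ^ 2 + 1) * Real.cosh (T * Real.sqrt (a ^ 2 + 1))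
      - a * Real.sinh (T * Real.sqrt (a ^ 2 + 1)))
      (x / s * C + s * (S * (T * (x / s))) - (1 * S + x * (C * (T * (x / s))))) x :=
    (hds.mul hcosh).sub ((hasDerivAt_id x).mul hsinh)
  have hlogs : HasDerivAt (fun a : ℝ => Real.log (Real.sqrt (a ^ 2 + 1))) (x / s / s) x :=
    hds.log hs.ne'
  have hlin : HasDerivAt (fun a : ℝ => a * T) T x := by
    simpa using (hasDerivAt_id x).mul_const T
  have hF : HasDerivAt (fun a : ℝ => a * T - Real.log (Real.sqrt (a ^ 2 + 1)) +
      Real.log (Real.sqrt (a ^ 2 + 1) * Real.cosh (T * Real.sqrt (a ^ 2 + 1))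
        - a * Real.sinh (T * Real.sqrt (a ^ 2 + 1))))
      (T - x / s / s +
        (x / s * C + s * (S * (T * (x / s))) - (1 * S + x * (C * (T * (x / s)))))
          / (s * C - x * S)) x :=
    (hlin.sub hlogs).add (hgd.log hg.ne')
  rw [hF.deriv]
  have hnum : 0 < T * s * C - S := by
    have h := sinh_lt_mul_cosh (mul_pos hT hs)
    rw [← hC, ← hS] at h
    nlinarith
  have hden : 0 < s ^ 2 * (s * C - x * S) := by positivity
  have hkey : T - x / s / s +
      (x / s * C + s * (S * (T * (x / s))) - (1 * S + x * (C * (T * (x / s)))))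
        / (s * C - x * S) = (T * s * C - S) / (s ^ 2 * (s * C - x * S)) := by
    rw [eq_div_iff hden.ne']
    field_simp
    linear_combination (T * s * C - S) * hs2
  rw [hkey]
  exact div_pos hnum hden
end

section
/- Let T > 0 and a ∈ ℝ. Then for every t ∈ [0, T), the function p_{T,a}(t) = a − √(a²+1)·tanh((t−T)·√(a²+1) + artanh(a/√(a²+1))) satisfies p_{T,a}(t) > 0. -/
lemma tanh_eq_exp (x : ℝ) :
    Real.tanh x = (Real.exp (2 * x) - 1) / (Real.exp (2 * x) + 1) := by
  rw [Real.tanh_eq_sinh_div_cosh, Real.sinh_eq, Real.cosh_eq]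
  have h1 : Real.exp x ≠ 0 := Real.exp_ne_zero x
  have h2 : Real.exp x + Real.exp (-x) ≠ 0 := by positivity
  have h3 : Real.exp (2 * x) + 1 ≠ 0 := by positivity
  have e2 : Real.exp (2 * x) = Real.exp x * Real.exp x := by
    rw [← Real.exp_add]; ring_nf
  rw [e2, Real.exp_neg]
  field_simp

/-- For `T > 0` and every `t ∈ [0, T)`, the Riccati solution `p_{T,a}(t)` is positive. -/
theorem riccatiP_pos (T a : ℝ) (hT : 0 < T) :
    ∀ t ∈ Set.Ico (0:ℝ) T, 0 < riccatiP T a t := by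
  intro t ht
  obtain ⟨ht0, htT⟩ := ht
  set s := Real.sqrt (a ^ 2 + 1) with hs
  have hs0 : 0 < s := Real.sqrt_pos.mpr (by positivity)
  have hs2 : s ^ 2 = a ^ 2 + 1 := Real.sq_sqrt (by positivity)
  have hsa : a < s := by nlinarith [abs_nonneg a, sq_abs a]
  have hsa' : -s < a := by nlinarith
  have hpos1 : 0 < s + a := by linarith
  have hpos2 : 0 < s - a := by linarith
  -- rewrite artanh argument
  have harg : artanh (a / s) = Real.log ((s + a) / (s - a)) / 2 := by
    unfold artanh
    have h1 : a / s < 1 := (div_lt_one hs0).mpr hsa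
    have h1' : (0:ℝ) < 1 - a / s := by linarith
    congr 2
    rw [div_eq_div_iff h1'.ne' hpos2.ne']
    field_simp
  unfold riccatiP
  rw [← hs, harg, tanh_eq_exp]
  set u := (t - T) * s + Real.log ((s + a) / (s - a)) / 2 with hu
  have hE : Real.exp (2 * u) = Real.exp (2 * (t - T) * s) * ((s + a) / (s - a)) := by
    rw [hu, mul_add, Real.exp_add]
    congr 1
    · ring_nf
    · rw [mul_div_cancel₀ _ (two_ne_zero), Real.exp_log (by positivity)]
  have hlt : Real.exp (2 * (t - T) * s) < 1 := by
    rw [Real.exp_lt_one_iff]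
    nlinarith
  have hEpos : 0 < Real.exp (2 * u) := Real.exp_pos _
  have hElt : Real.exp (2 * u) < (s + a) / (s - a) := by
    rw [hE]
    calc Real.exp (2 * (t - T) * s) * ((s + a) / (s - a)) < 1 * ((s + a) / (s - a)) := by
          apply mul_lt_mul_of_pos_right hlt (by positivity)
      _ = (s + a) / (s - a) := one_mul _
  have hkey : (s - a) * Real.exp (2 * u) < s + a := by
    rw [lt_div_iff₀ hpos2] at hElt
    nlinarith
  have hden : 0 < Real.exp (2 * u) + 1 := by positivity
  rw [sub_pos, ← mul_div_assoc, div_lt_iff₀ hden]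
  nlinarith
end

section
/- For every T > 0 and every a ∈ ℝ, f_T(a) > 0, where f_T(a) = a·T − log(√(a²+1)) + log(cosh(log(√(a²+1)+a) − T·√(a²+1))). -/
/-- For every `T > 0` and every `a ∈ ℝ`, the optimal cost `f_T(a)` is strictly positive. -/
theorem optCost_pos (T : ℝ) (hT : 0 < T) (a : ℝ) : 0 < optCost T a := by
  set s := Real.sqrt (a ^ 2 + 1) with hs_def
  have hsq : s ^ 2 = a ^ 2 + 1 := Real.sq_sqrt (by positivity)
  have hs0 : 0 ≤ s := Real.sqrt_nonneg _
  have hsa : 0 < s + a := by nlinarith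
  have hsa' : 0 < s - a := by nlinarith
  have hmul : (s + a) * (s - a) = 1 := by nlinarith
  have hs : 0 < s := by linarith
  set L := Real.log (s + a) with hL_def
  have hexpL : Real.exp L = s + a := Real.exp_log hsa
  -- key inequality
  have hu : 0 < (s + a) * T := mul_pos hsa hT
  have hv : 0 < (s - a) * T := mul_pos hsa' hT
  have h1 : (s + a) * T + 1 < Real.exp ((s + a) * T) := Real.add_one_lt_exp (ne_of_gt hu)
  have h2 : (-((s - a) * T)) + 1 ≤ Real.exp (-((s - a) * T)) := Real.add_one_le_exp _
  have key : 2 * s <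
      (s - a) * Real.exp ((s + a) * T) + (s + a) * Real.exp (-((s - a) * T)) := by
    have e1 : (s - a) * ((s + a) * T + 1) < (s - a) * Real.exp ((s + a) * T) :=
      mul_lt_mul_of_pos_left h1 hsa'
    have e2 : (s + a) * (-((s - a) * T) + 1) ≤ (s + a) * Real.exp (-((s - a) * T)) :=
      mul_le_mul_of_nonneg_left h2 (le_of_lt hsa)
    nlinarith [e1, e2]
  -- rewrite cosh
  have hcosh : Real.cosh (L - T * s) =
      ((s + a) * Real.exp (-(T * s)) + (s - a) * Real.exp (T * s)) / 2 := by
    rw [Real.cosh_eq]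
    have hA : Real.exp (L - T * s) = (s + a) * Real.exp (-(T * s)) := by
      rw [sub_eq_add_neg, Real.exp_add, hexpL]
    have hB : Real.exp (-(L - T * s)) = (s - a) * Real.exp (T * s) := by
      have : Real.exp (-(L - T * s)) = Real.exp (-L) * Real.exp (T * s) := by
        rw [← Real.exp_add]; ring_nf
      rw [this, Real.exp_neg, hexpL]
      have hinv : (s + a)⁻¹ = s - a := by
        field_simp
        linarith [hmul]
      rw [hinv]
    rw [hA, hB]
  -- main comparison: s < exp(a*T) * cosh(L - T*s)
  have hmain : s < Real.exp (a * T) * Real.cosh (L - T * s) := by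
    rw [hcosh]
    have eu : Real.exp (a * T) * Real.exp (T * s) = Real.exp ((s + a) * T) := by
      rw [← Real.exp_add]; ring_nf
    have ev : Real.exp (a * T) * Real.exp (-(T * s)) = Real.exp (-((s - a) * T)) := by
      rw [← Real.exp_add]; ring_nf
    have expand : Real.exp (a * T) *
        (((s + a) * Real.exp (-(T * s)) + (s - a) * Real.exp (T * s)) / 2) =
        ((s + a) * Real.exp (-((s - a) * T)) + (s - a) * Real.exp ((s + a) * T)) / 2 := by
      rw [← eu, ← ev]; ring
    rw [expand]
    linarith [key]
  -- conclude
  have hcoshpos : 0 < Real.cosh (L - T * s) := Real.cosh_pos _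
  have hlog : Real.log s < Real.log (Real.exp (a * T) * Real.cosh (L - T * s)) :=
    Real.log_lt_log hs hmain
  rw [Real.log_mul (Real.exp_ne_zero _) (ne_of_gt hcoshpos), Real.log_exp] at hlog
  unfold optCost
  rw [← hs_def, ← hL_def]
  linarith
end

section
/- For every T > 0 there exists a constant C > 0 (depending only on T) such that for all a ≥ 1, f_T(a) ≥ C·a, where f_T(a) = a·T − log(√(a²+1)) + log(cosh(log(√(a²+1)+a) − T·√(a²+1))). -/
/-- For every `T > 0` there is `C > 0` with `f_T(a) ≥ C·a` for all `a ≥ 1`. -/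
theorem optCost_lower_bound_pos (T : ℝ) (hT : 0 < T) :
    ∃ C > 0, ∀ a : ℝ, 1 ≤ a → C * a ≤ optCost T a := by
  set m : ℝ := Real.log (1 + T ^ 2 / 8) with hmdef
  have hm : 0 < m := Real.log_pos (by nlinarith)
  set K : ℝ := Real.log 12 - 2 - 2 * Real.log (T / 4) with hKdef
  set A : ℝ := max 1 (2 * K / T) with hAdef
  have hA1 : (1 : ℝ) ≤ A := le_max_left _ _
  have hA0 : (0 : ℝ) < A := by linarith
  clear_value m K A
  refine ⟨min T (m / A), lt_min hT (div_pos hm hA0), fun a ha => ?_⟩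
  have ha0 : (0 : ℝ) < a := by linarith
  set s : ℝ := Real.sqrt (a ^ 2 + 1) with hsdef
  have hs0 : 0 < s := Real.sqrt_pos.mpr (by positivity)
  have hssq : s ^ 2 = a ^ 2 + 1 := Real.sq_sqrt (by positivity)
  have hsa : a ≤ s := by nlinarith
  have hs2a : s ≤ a + 1 := by nlinarith
  set b : ℝ := s + a with hbdef
  have hb0 : 0 < b := by linarith
  have hb1 : b * (s - a) = 1 := by nlinarith
  have hb3 : b ≤ 3 * a := by linarith
  have hs2 : s ≤ 2 * a := by linarith
  set E : ℝ := Real.exp (T * s) with hEdef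
  have hE0 : 0 < E := Real.exp_pos _
  set Q : ℝ := (b / E + E / b) / 2 with hQdef
  have hQ0 : 0 < Q := by positivity
  have hX : Real.cosh (Real.log b - T * s) = Q := by
    rw [hQdef, hEdef, Real.cosh_eq, Real.exp_sub, Real.exp_log hb0, neg_sub, Real.exp_sub,
      Real.exp_log hb0]
  have hoc : optCost T a = Real.log (Real.exp (a * T) * Q / s) := by
    rw [Real.log_div (by positivity) (ne_of_gt hs0),
      Real.log_mul (by positivity) (ne_of_gt hQ0), Real.log_exp]
    unfold optCost
    rw [← hsdef, ← hbdef, hX]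
    ring
  clear_value s b E Q
  have hEQ : Real.exp (a * T) * Q = (b * Real.exp (-(T * (s - a))) + Real.exp (T * b) / b) / 2 := by
    rw [hQdef, hEdef]
    rw [show -(T * (s - a)) = a * T - T * s by ring, Real.exp_sub,
      show T * b = a * T + T * s by rw [hbdef]; ring, Real.exp_add]
    field_simp
  -- Bound B : exp(aT)·Q ≥ s + T²s/8
  have hexp1 : b - T ≤ b * Real.exp (-(T * (s - a))) := by
    have h1 : T * (s - a) = T / b := by
      field_simp
      linear_combination hb1
    have h2 : 1 + -(T / b) ≤ Real.exp (-(T / b)) := by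
      linarith [Real.add_one_le_exp (-(T / b))]
    rw [h1]
    have h3 : b * (1 + -(T / b)) ≤ b * Real.exp (-(T / b)) :=
      mul_le_mul_of_nonneg_left h2 (le_of_lt hb0)
    calc b - T = b * (1 + -(T / b)) := by field_simp; ring
      _ ≤ _ := h3
  have hexp2 : 1 / b + T + T ^ 2 * b / 4 ≤ Real.exp (T * b) / b := by
    have h1 : 1 + T * b / 2 ≤ Real.exp (T * b / 2) := by
      linarith [Real.add_one_le_exp (T * b / 2)]
    have h2 : (1 + T * b / 2) ^ 2 ≤ Real.exp (T * b) := by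
      have hnn : (0 : ℝ) ≤ 1 + T * b / 2 := by positivity
      calc (1 + T * b / 2) ^ 2 ≤ Real.exp (T * b / 2) ^ 2 := pow_le_pow_left₀ hnn h1 2
        _ = Real.exp (T * b) := by rw [sq, ← Real.exp_add]; ring_nf
    rw [le_div_iff₀ hb0]
    have hinv : 1 / b * b = 1 := by field_simp
    nlinarith [h2, hinv]
  have h2s : b + 1 / b = 2 * s := by
    have h : 1 / b = s - a := by
      field_simp
      linarith [hssq]
    rw [h, hbdef]; ring
  have hsum : s + T ^ 2 * s / 8 ≤ Real.exp (a * T) * Q := by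
    rw [hEQ]
    have hsplit : T ^ 2 * b = T ^ 2 * s + T ^ 2 * a := by rw [hbdef]; ring
    linarith [hexp1, hexp2, h2s, hsplit, mul_nonneg (sq_nonneg T) ha0.le]
  have hB : m ≤ optCost T a := by
    rw [hoc, hmdef]
    refine Real.log_le_log (by positivity) ?_
    rw [le_div_iff₀ hs0]
    have hr : (1 + T ^ 2 / 8) * s = s + T ^ 2 * s / 8 := by ring
    linarith [hsum]
  -- Bound A : optCost ≥ (3T/2)·a − K
  have hA : 3 * T / 2 * a - K ≤ optCost T a := by
    have hQ2 : Real.exp (T * b) / (2 * b) ≤ Real.exp (a * T) * Q := by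
      rw [hEQ]
      have heq : Real.exp (T * b) / (2 * b) = Real.exp (T * b) / b / 2 := by ring
      have hp : 0 < b * Real.exp (-(T * (s - a))) := by positivity
      linarith [heq, hp]
    have hG1 : Real.exp (T * b) / (2 * b * s) ≤ Real.exp (a * T) * Q / s := by
      have heq : Real.exp (T * b) / (2 * b * s) = Real.exp (T * b) / (2 * b) / s := by
        ring
      rw [heq]
      exact div_le_div_of_nonneg_right hQ2 hs0.le
    have hlog1 : T * b - Real.log (2 * b * s) ≤ optCost T a := by
      rw [hoc]
      have := Real.log_le_log (by positivity) hG1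
      rwa [Real.log_div (by positivity) (by positivity), Real.log_exp] at this
    have hlog2 : Real.log (2 * b * s) ≤ Real.log 12 + 2 * Real.log a := by
      have hbs : b * s ≤ 3 * a * (2 * a) := mul_le_mul hb3 hs2 hs0.le (by positivity)
      have h1 : Real.log (2 * b * s) ≤ Real.log (12 * a ^ 2) :=
        Real.log_le_log (by positivity) (by linarith)
      have h2 : Real.log (12 * a ^ 2) = Real.log 12 + 2 * Real.log a := by
        rw [Real.log_mul (by norm_num) (by positivity), Real.log_pow]
        push_cast; ring
      linarith
    have hloga : Real.log a ≤ a * T / 4 - 1 - Real.log (T / 4) := by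
      have h := Real.log_le_sub_one_of_pos (show (0 : ℝ) < a * (T / 4) by positivity)
      rw [Real.log_mul (ne_of_gt ha0) (by positivity)] at h
      linarith
    have htb : T * (2 * a) ≤ T * b := by
      have : 2 * a ≤ b := by linarith
      exact mul_le_mul_of_nonneg_left this hT.le
    rw [hKdef]
    linarith
  -- assemble
  rcases le_total a A with hcase | hcase
  · have h1 : min T (m / A) * a ≤ m / A * a :=
      mul_le_mul_of_nonneg_right (min_le_right _ _) ha0.le
    have h2 : m / A * a ≤ m / A * A :=
      mul_le_mul_of_nonneg_left hcase (by positivity)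
    have h3 : m / A * A = m := div_mul_cancel₀ m (ne_of_gt hA0)
    linarith
  · have hKa : K ≤ T / 2 * a := by
      have h1 : 2 * K / T ≤ a := le_trans (by rw [hAdef]; exact le_max_right _ _) hcase
      rw [div_le_iff₀ hT] at h1
      linarith
    have h1 : min T (m / A) * a ≤ T * a :=
      mul_le_mul_of_nonneg_right (min_le_left _ _) ha0.le
    linarith
end

section
/- For every T > 0 there exists a constant C > 0 (depending only on T) such that for all a ≤ −1, f_T(a) ≥ C/|a|, where f_T(a) = a·T − log(√(a²+1)) + log(cosh(log(√(a²+1)+a) − T·√(a²+1))). -/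
/-!
Put `s = √(a²+1)`, `p = s - a` and `q = s + a`, so that `p q = 1` and `p + q = 2 s`.
Expanding the `cosh` gives `exp (f_T a) = (p e^{Tq} + q e^{-Tp}) / (p + q)`. Against the
weights `p` and `q`, the gain `p (e^{Tq} - 1) ≥ T + T² q / 2` beats the loss
`q (1 - e^{-Tp}) ≤ min q T` by at least `min T (T³/2)`, uniformly in `a`. Since
`p + q ≤ 3 |a|` for `|a| ≥ 1`, this gives `f_T a ≥ log (1 + c / |a|)` with `c > 0` depending
only on `T`, and `log (1 + x) ≳ x` for small `x`.
-/

open Real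

theorem abs_lt_sqrt_sq_add_one (a : ℝ) : |a| < √(a ^ 2 + 1) :=
  (lt_sqrt (abs_nonneg a)).2 (by rw [sq_abs]; linarith)

theorem optCost_eq_log (T a : ℝ) :
    optCost T a = log (((√(a ^ 2 + 1) - a) * exp (T * (√(a ^ 2 + 1) + a)) +
      (√(a ^ 2 + 1) + a) * exp (-(T * (√(a ^ 2 + 1) - a)))) / (2 * √(a ^ 2 + 1))) := by
  set s := √(a ^ 2 + 1) with hs
  have hs2 : s ^ 2 = a ^ 2 + 1 := sq_sqrt (by positivity)
  have has := abs_lt_sqrt_sq_add_one a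
  rw [← hs] at has
  have hp : 0 < s - a := by linarith [le_abs_self a]
  have hq : 0 < s + a := by linarith [neg_abs_le a]
  have hs0 : 0 < s := by linarith [abs_nonneg a]
  have hqp : (s + a)⁻¹ = s - a := inv_eq_of_mul_eq_one_right (by linear_combination hs2)
  have hcosh : cosh (log (s + a) - T * s) =
      ((s - a) * exp (T * s) + (s + a) * exp (-(T * s))) / 2 := by
    rw [cosh_eq, exp_sub, neg_sub, exp_sub, exp_log hq, div_eq_mul_inv (exp _), hqp, exp_neg]
    ring
  have hpos : 0 < ((s - a) * exp (T * s) + (s + a) * exp (-(T * s))) / 2 := by positivity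
  rw [optCost, ← hs, hcosh, ← log_exp (a * T), ← log_div (exp_pos _).ne' hs0.ne',
    ← log_mul (by positivity) hpos.ne']
  congr 1
  rw [show T * (s + a) = a * T + T * s by ring, show -(T * (s - a)) = a * T + -(T * s) by ring,
    exp_add, exp_add]
  field_simp

theorem add_add_min_le_mul_exp_add_mul_exp {T p q : ℝ} (hT : 0 < T) (hp : 0 < p)
    (hq : 0 < q) (hpq : p * q = 1) :
    p + q + min T (T ^ 3 / 2) ≤ p * exp (T * q) + q * exp (-(T * p)) := by
  have hgain : T + T ^ 2 * q / 2 ≤ p * (exp (T * q) - 1) := by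
    have := quadratic_le_exp_of_nonneg (by positivity : 0 ≤ T * q)
    calc T + T ^ 2 * q / 2 = p * (T * q + (T * q) ^ 2 / 2) := by
          linear_combination (-T - T ^ 2 * q / 2) * hpq
      _ ≤ p * (exp (T * q) - 1) := by gcongr; linarith
  have hloss : q * (1 - exp (-(T * p))) ≤ min q T := by
    refine le_min ?_ ?_
    · nlinarith [exp_pos (-(T * p))]
    · nlinarith [add_one_le_exp (-(T * p))]
  rcases min_cases q T with ⟨hmin, hqT⟩ | ⟨hmin, hTq⟩
  · -- `T - q + T ^ 2 * q / 2` is affine in `q ∈ [0, T]`, with end values `T` and `T ^ 3 / 2`.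
    have : T * min T (T ^ 3 / 2) ≤ T * (T - q + T ^ 2 * q / 2) := by
      nlinarith [min_le_left T (T ^ 3 / 2), min_le_right T (T ^ 3 / 2)]
    nlinarith [le_of_mul_le_mul_left this hT]
  · nlinarith [min_le_right T (T ^ 3 / 2)]

theorem two_mul_sqrt_sq_add_one_le {a : ℝ} (ha : 1 ≤ |a|) : 2 * √(a ^ 2 + 1) ≤ 3 * |a| := by
  nlinarith [sq_sqrt (by positivity : 0 ≤ a ^ 2 + 1), sqrt_nonneg (a ^ 2 + 1), sq_abs a]

theorem log_one_add_le_optCost {T a : ℝ} (hT : 0 < T) (ha : 1 ≤ |a|) :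
    log (1 + min T (T ^ 3 / 2) / 3 / |a|) ≤ optCost T a := by
  set s := √(a ^ 2 + 1) with hs
  have has : |a| < s := abs_lt_sqrt_sq_add_one a
  have hs2 : s ^ 2 = a ^ 2 + 1 := sq_sqrt (by positivity)
  have hm : 0 < min T (T ^ 3 / 2) := lt_min hT (by positivity)
  have hweighted := add_add_min_le_mul_exp_add_mul_exp hT
    (by linarith [le_abs_self a] : 0 < s - a) (by linarith [neg_abs_le a] : 0 < s + a)
    (by linear_combination hs2)
  rw [optCost_eq_log, ← hs]
  refine log_le_log (by positivity) ?_
  calc 1 + min T (T ^ 3 / 2) / 3 / |a| ≤ 1 + min T (T ^ 3 / 2) / (2 * s) := by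
        rw [div_div]; gcongr 1 + _ / ?_; exact two_mul_sqrt_sq_add_one_le ha
    _ ≤ _ := by
        rw [le_div_iff₀ (by positivity), add_mul, div_mul_cancel₀ _ (by positivity)]
        linarith

/-- For every `T > 0` there is `C > 0` with `f_T(a) ≥ C/|a|` for all `a ≤ −1`. -/
theorem optCost_lower_bound_neg (T : ℝ) (hT : 0 < T) :
    ∃ C > 0, ∀ a : ℝ, a ≤ -1 → C / |a| ≤ optCost T a := by
  set K := min T (T ^ 3 / 2) / 3
  have hK : 0 < K := by positivity
  refine ⟨2 * K / (K + 2), by positivity, fun a ha => ?_⟩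
  have ha1 : 1 ≤ |a| := by rw [abs_of_neg (by linarith)]; linarith
  have hx : K / |a| ≤ K := div_le_self hK.le ha1
  calc 2 * K / (K + 2) / |a| = 2 * (K / |a|) / (K + 2) := by ring
    _ ≤ 2 * (K / |a|) / (K / |a| + 2) := by gcongr
    _ ≤ log (1 + K / |a|) := le_log_one_add_of_nonneg (by positivity)
    _ ≤ optCost T a := log_one_add_le_optCost hT ha1
end

section
/- For every T > 0 and every a < 0, f_T(a) ≥ T·(√(a²+1) + a) + log((√(a²+1) − a)/(2·√(a²+1))), where f_T(a) = a·T − log(√(a²+1)) + log(cosh(log(√(a²+1)+a) − T·√(a²+1))). -/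
/-- For every `T > 0` and every `a < 0`,
`f_T(a) ≥ T·(√(a²+1) + a) + log((√(a²+1) − a)/(2·√(a²+1)))`. -/
theorem optCost_neg_lower_bound (T : ℝ) (hT : 0 < T) (a : ℝ) (ha : a < 0) :
    T * (Real.sqrt (a ^ 2 + 1) + a) +
        Real.log ((Real.sqrt (a ^ 2 + 1) - a) / (2 * Real.sqrt (a ^ 2 + 1)))
      ≤ optCost T a := by
  set s := Real.sqrt (a ^ 2 + 1) with hs
  have hpos : (0:ℝ) < a ^ 2 + 1 := by positivity
  have hspos : 0 < s := Real.sqrt_pos.mpr hpos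
  have hs2 : s ^ 2 = a ^ 2 + 1 := Real.sq_sqrt hpos.le
  have hsma : 0 < s - a := by linarith
  have hmul : (s + a) * (s - a) = 1 := by nlinarith
  have hsa : 0 < s + a := by nlinarith
  set x : ℝ := Real.log (s + a) - T * s with hxdef
  have hlogx : Real.log (Real.exp (-x) / 2) ≤ Real.log (Real.cosh x) := by
    apply Real.log_le_log (by positivity)
    rw [Real.cosh_eq]
    have := (Real.exp_pos x).le
    linarith
  have h1 : Real.log (Real.exp (-x) / 2) = -x - Real.log 2 := by
    rw [Real.log_div (Real.exp_ne_zero _) two_ne_zero, Real.log_exp]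
  have hlsa : Real.log (s + a) = - Real.log (s - a) := by
    have : s + a = (s - a)⁻¹ := by
      field_simp
      linarith [hmul]
    rw [this, Real.log_inv]
  have hlhs : Real.log ((s - a) / (2 * s)) =
      Real.log (s - a) - Real.log 2 - Real.log s := by
    rw [Real.log_div (ne_of_gt hsma) (by positivity),
      Real.log_mul two_ne_zero (ne_of_gt hspos)]
    ring
  show T * (s + a) + Real.log ((s - a) / (2 * s)) ≤
      a * T - Real.log s + Real.log (Real.cosh x)
  have key : -x - Real.log 2 ≤ Real.log (Real.cosh x) := h1 ▸ hlogx
  rw [hlhs]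
  have hxval : x = - Real.log (s - a) - T * s := by rw [hxdef, hlsa]
  rw [hxval] at key
  linarith
end
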